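/- arXiv:1111.1287 — 7 statements merged into one kernel-verified Lean document; each statement's English description precedes it below -/
import Mathlib

section
/- Let G be a torsion discrete abelian group and φ : G → G an endomorphism. Then h_A(φ) = ent(φ); that is, the supremum over all finite subsets C of G containing 0 of limsup_{n→∞} (log |T_n(φ,C)|)/n equals the supremum over all finite subgroups C of G of limsup_{n→∞} (log |T_n(φ,C)|)/n. -/
open MeasureTheory Filter Pointwise
open scoped ENNReal

noncomputable section

/-- The `n`-th `φ`-trajectory of `C`: `C + φ C + ⋯ + φ^{n-1} C` (pointwise sum of sets). -/
def traj {G : Type*} [AddCommGroup G] (φ : G → G) (C : Set G) (n : ℕ) : Set G :=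
  ∑ i ∈ Finset.range n, φ^[i] '' C

/-- The algebraic entropy of `φ` with respect to `C`, computed with the counting measure
(i.e. with cardinalities). -/
def entHcount {G : Type*} [AddCommGroup G] (φ : G → G) (C : Set G) : EReal :=
  Filter.limsup
    (fun n : ℕ => ENNReal.log ((traj φ C n).encard : ℝ≥0∞) / (n : EReal)) Filter.atTop

/-! A finite subset of a torsion abelian group generates a finitely generated torsion, hence
finite, subgroup; since the entropy `entHcount φ C` is monotone in `C`, the supremum over finite
sets containing `0` is already reached on finite subgroups. -/

section

variable {G : Type*} [AddCommGroup G]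

lemma traj_mono (φ : G → G) {C D : Set G} (h : C ⊆ D) (n : ℕ) : traj φ C n ⊆ traj φ D n := by
  unfold traj
  gcongr

lemma entHcount_mono (φ : G → G) {C D : Set G} (h : C ⊆ D) : entHcount φ C ≤ entHcount φ D := by
  refine limsup_le_limsup (.of_forall fun n => ?_)
  refine EReal.div_le_div_right_of_nonneg (by exact_mod_cast n.zero_le) ?_
  exact ENNReal.log_monotone (by exact_mod_cast Set.encard_mono (traj_mono φ h n))

lemma AddSubgroup.finite_closure_of_isAddTorsion (hG : IsAddTorsion G) {C : Set G}
    (hC : C.Finite) : (AddSubgroup.closure C : Set G).Finite := by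
  have : Finite C := hC
  have : Finite (AddSubgroup.closure C) :=
    AddCommGroup.finite_of_fg_isAddTorsion _ (hG.addSubgroup _)
  exact Set.toFinite _

end

/-- **Algebraic entropy and Weiss' entropy coincide on torsion groups.**
Let `G` be a torsion (discrete) abelian group and `φ : G → G` an endomorphism.  Then
`h_A(φ) = ent(φ)`: the supremum over all finite subsets `C ∋ 0` of
`limsup (log |T_n(φ,C)|)/n` equals the supremum over all finite subgroups. -/
theorem entha_eq_ent_of_isTorsion
    {G : Type*} [AddCommGroup G] (hG : AddMonoid.IsTorsion G) (φ : G →+ G) :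
    (⨆ (C : Set G) (_ : C.Finite ∧ (0 : G) ∈ C), entHcount (⇑φ) C) =
      ⨆ (H : AddSubgroup G) (_ : (H : Set G).Finite), entHcount (⇑φ) (H : Set G) := by
  apply le_antisymm
  · refine iSup₂_le fun C ⟨hC, _⟩ => ?_
    calc entHcount φ C ≤ entHcount φ (AddSubgroup.closure C) :=
          entHcount_mono φ AddSubgroup.subset_closure
      _ ≤ _ := le_iSup₂_of_le (AddSubgroup.closure C)
          (AddSubgroup.finite_closure_of_isAddTorsion hG hC) le_rfl
  · exact iSup₂_le fun H hH => le_iSup₂_of_le (H : Set G) ⟨hH, H.zero_mem⟩ le_rfl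
end
end

section
/- Let G be an LCA group and φ an automorphism of G. Then h_A(φ^{-1}) = h_A(φ) − log(mod_G(φ)). -/
/-! `φⁿ` maps the `φ⁻¹`-trajectory `C + φ⁻¹C + ⋯ + φ⁻ⁿC` onto the `φ`-trajectory
`φⁿC + ⋯ + φC + C`, so the Haar measures of the two `(n+1)`-th trajectories differ by the
factor `mod_G(φ)ⁿ`. After taking logarithms and dividing by `n + 1`, the two sequences differ by
`n/(n+1) · log mod_G(φ) → log mod_G(φ)`, which shifts every `limsup`, and hence the supremum over
`C`, by `log mod_G(φ)`. -/

open MeasureTheory Filter Pointwise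

noncomputable section

/-- The algebraic entropy of `φ` with respect to `C`, computed with the measure `μ`. -/
def entH {G : Type*} [AddCommGroup G] [MeasurableSpace G]
    (μ : Measure G) (φ : G → G) (C : Set G) : EReal :=
  Filter.limsup (fun n : ℕ => ENNReal.log (μ (traj φ C n)) / (n : EReal)) Filter.atTop

/-- The algebraic entropy of `φ`: the supremum of `entH μ φ C` over all compact
neighbourhoods `C` of `0`. -/
def entha {G : Type*} [AddCommGroup G] [TopologicalSpace G] [MeasurableSpace G]
    (μ : Measure G) (φ : G → G) : EReal :=
  ⨆ (C : Set G) (_ : IsCompact C ∧ C ∈ nhds (0 : G)), entH μ φ C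

open Topology

namespace EReal

lemma limsup_add_of_tendsto_coe {ι : Type*} {f : Filter ι} [f.NeBot] {u v : ι → EReal} {L : ℝ}
    (hv : Tendsto v f (𝓝 L)) : limsup (u + v) f = limsup u f + L := by
  have hsup := hv.limsup_eq
  refine le_antisymm ?_ ?_
  · calc limsup (u + v) f ≤ limsup u f + limsup v f :=
          limsup_add_le (Or.inr (hsup ▸ coe_ne_top L)) (Or.inr (hsup ▸ coe_ne_bot L))
      _ = limsup u f + L := by rw [hsup]
  · calc limsup u f + L = limsup u f + liminf v f := by rw [hv.liminf_eq]
      _ ≤ limsup (u + v) f := le_limsup_add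

lemma iSup_add_coe {ι : Sort*} (g : ι → EReal) (L : ℝ) : (⨆ i, g i) + L = ⨆ i, (g i + L) :=
  Monotone.map_iSup_of_continuousAt (f := (· + (L : EReal)))
    ((continuousAt_add (Or.inr (coe_ne_bot L)) (Or.inr (coe_ne_top L))).comp
      (continuousAt_id.prodMk continuousAt_const))
    (fun _ _ h => add_le_add_left h _) (by simp)

end EReal

lemma MeasurableEquiv.measure_image_eq_mul {α β : Type*} [MeasurableSpace α] [MeasurableSpace β]
    {μ : Measure α} {ν : Measure β} (e : α ≃ᵐ β) {c : ENNReal}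
    (h : ∀ E, MeasurableSet E → ν (e '' E) = c * μ E) (A : Set α) :
    ν (e '' A) = c * μ A := by
  have hmap : ν.map e.symm = c • μ := by
    ext E hE
    rw [e.symm.map_apply, ← e.image_eq_preimage_symm, h E hE, Measure.smul_apply, smul_eq_mul]
  rw [e.image_eq_preimage_symm, ← e.symm.map_apply, hmap, Measure.smul_apply, smul_eq_mul]

lemma measure_iterate_image_eq_pow_mul {α : Type*} [MeasurableSpace α] {μ : Measure α}
    {f : α → α} {c : ENNReal} (h : ∀ A, μ (f '' A) = c * μ A) (k : ℕ) (A : Set α) :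
    μ (f^[k] '' A) = c ^ k * μ A := by
  induction k generalizing A with
  | zero => simp
  | succ k ih =>
    rw [Function.iterate_succ', Set.image_comp, h, ih, pow_succ, mul_comm _ c, mul_assoc]

section Trajectory

variable {G : Type*} [AddCommGroup G]

lemma traj_succ (φ : G → G) (C : Set G) (n : ℕ) :
    traj φ C (n + 1) = traj φ C n + φ^[n] '' C :=
  Finset.sum_range_succ _ _

lemma subset_traj_succ {φ : G → G} (hφ : φ 0 = 0) {C : Set G} (hC : (0 : G) ∈ C) (n : ℕ) :
    C ⊆ traj φ C (n + 1) := by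
  induction n with
  | zero => simp [traj]
  | succ n ih =>
    rw [traj_succ]
    exact ih.trans (Set.subset_add_left _ ⟨0, hC, Function.iterate_fixed hφ _⟩)

lemma isCompact_traj [TopologicalSpace G] [ContinuousAdd G] {φ : G → G} (hφ : Continuous φ)
    {C : Set G} (hC : IsCompact C) (n : ℕ) : IsCompact (traj φ C n) := by
  induction n with
  | zero => simp [traj]
  | succ n ih => rw [traj_succ]; exact ih.add (hC.image (hφ.iterate n))

lemma iterate_image_traj_symm (φ : G ≃+ G) (C : Set G) (n : ℕ) :
    (⇑φ)^[n] '' traj φ.symm C (n + 1) = traj φ C (n + 1) := by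
  let ψ : AddMonoid.End G := φ.toAddMonoidHom
  change ⇑(ψ ^ n) '' _ = _
  rw [traj, traj, ← Finset.sum_range_reflect _ (n + 1), Set.image_finsetSum]
  refine Finset.sum_congr rfl fun i hi => ?_
  have hi : i ≤ n := Nat.lt_succ_iff.mp (Finset.mem_range.mp hi)
  change (⇑φ)^[n] '' _ = _
  rw [← Set.image_comp, Nat.add_sub_cancel, ← Nat.add_sub_cancel' hi, Function.iterate_add,
    Function.comp_assoc, Nat.add_sub_cancel_left,
    (Function.LeftInverse.iterate φ.apply_symm_apply _).comp_eq_id, Function.comp_id]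

end Trajectory

lemma limsup_log_div_eq_add_log {x y : ℕ → ENNReal} {r : ℝ} (hr : 0 < r)
    (hxy : ∀ n, x (n + 1) = ENNReal.ofReal r ^ n * y (n + 1))
    (hy0 : ∀ n, y (n + 1) ≠ 0) (hytop : ∀ n, y (n + 1) ≠ ⊤) :
    limsup (fun n : ℕ => ENNReal.log (x n) / (n : EReal)) atTop
      = limsup (fun n : ℕ => ENNReal.log (y n) / (n : EReal)) atTop + Real.log r := by
  have hc : Tendsto (fun n : ℕ => ((Real.log r - Real.log r / n : ℝ) : EReal)) atTop
      (𝓝 (Real.log r)) := by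
    refine EReal.tendsto_coe.mpr ?_
    simpa using tendsto_const_nhds.sub (tendsto_const_div_atTop_nhds_zero_nat (Real.log r))
  rw [← EReal.limsup_add_of_tendsto_coe hc]
  refine limsup_congr (eventually_atTop.mpr ⟨1, fun n hn => ?_⟩)
  obtain ⟨m, rfl⟩ := Nat.exists_eq_add_of_le' hn
  simp only [Pi.add_apply]
  rw [hxy, ENNReal.log_mul_add, ENNReal.log_pow, ENNReal.log_ofReal_of_pos hr,
    ENNReal.log_pos_real (hy0 m) (hytop m), ← EReal.coe_coe_eq_natCast,
    ← EReal.coe_coe_eq_natCast, ← EReal.coe_mul, ← EReal.coe_add,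
    ← EReal.coe_div, ← EReal.coe_div, ← EReal.coe_add, EReal.coe_eq_coe_iff]
  push_cast
  field_simp
  ring

lemma entH_eq_entH_symm_add_log {G : Type*} [AddCommGroup G] [TopologicalSpace G]
    [ContinuousAdd G] [MeasurableSpace G] (μ : Measure G) [μ.IsOpenPosMeasure]
    [IsFiniteMeasureOnCompacts μ] (φ : G ≃+ G) (hφsymm : Continuous φ.symm) {r : ℝ} (hr : 0 < r)
    (hmod : ∀ A : Set G, μ (φ '' A) = ENNReal.ofReal r * μ A) {C : Set G} (hC : IsCompact C)
    (hC0 : C ∈ 𝓝 0) :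
    entH μ φ C = entH μ φ.symm C + Real.log r := by
  refine limsup_log_div_eq_add_log hr (fun n => ?_) (fun n => ?_) (fun n => ?_)
  · rw [← iterate_image_traj_symm, measure_iterate_image_eq_pow_mul hmod]
  · exact (μ.measure_pos_of_mem_nhds hC0).trans_le
      (measure_mono (subset_traj_succ (map_zero φ.symm) (mem_of_mem_nhds hC0) n)) |>.ne'
  · exact (isCompact_traj hφsymm hC (n + 1)).measure_lt_top.ne

theorem entha_inv_eq_entha_sub_log_mod_general
    {G : Type*} [AddCommGroup G] [TopologicalSpace G] [IsTopologicalAddGroup G]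
    [MeasurableSpace G] [BorelSpace G]
    (μ : Measure G) [μ.IsAddHaarMeasure]
    (φ : G ≃+ G) (hφ : Continuous φ) (hφsymm : Continuous φ.symm)
    (r : ℝ) (hr : 0 < r)
    (hmod : ∀ E : Set G, MeasurableSet E → μ (⇑φ '' E) = ENNReal.ofReal r * μ E) :
    entha μ (⇑φ.symm) = entha μ (⇑φ) - ((Real.log r : ℝ) : EReal) := by
  have hmod' : ∀ A : Set G, μ (φ '' A) = ENNReal.ofReal r * μ A :=
    (Homeomorph.mk φ.toEquiv hφ hφsymm).toMeasurableEquiv.measure_image_eq_mul hmod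
  have hentha : entha μ φ = entha μ φ.symm + Real.log r := by
    simp only [entha, EReal.iSup_add_coe]
    exact iSup_congr fun C => iSup_congr fun hC =>
      entH_eq_entH_symm_add_log μ φ hφsymm hr hmod' hC.1 hC.2
  rw [hentha, EReal.add_sub_cancel_right]

/-- **Algebraic entropy of the inverse automorphism.**
Let `G` be an LCA group with Haar measure `μ` and `φ` a topological automorphism of `G`
with modulus `mod_G(φ) = r`, i.e. `μ(φ E) = r · μ(E)` for every measurable `E`.  Then
`h_A(φ⁻¹) = h_A(φ) - log (mod_G φ)`. -/
theorem entha_inv_eq_entha_sub_log_mod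
    {G : Type*} [AddCommGroup G] [TopologicalSpace G] [IsTopologicalAddGroup G]
    [LocallyCompactSpace G] [MeasurableSpace G] [BorelSpace G]
    (μ : Measure G) [μ.IsAddHaarMeasure] [μ.Regular]
    (φ : G ≃+ G) (hφ : Continuous φ) (hφsymm : Continuous φ.symm)
    (r : ℝ) (hr : 0 < r)
    (hmod : ∀ E : Set G, MeasurableSet E → μ (⇑φ '' E) = ENNReal.ofReal r * μ E) :
    entha μ (⇑φ.symm) = entha μ (⇑φ) - ((Real.log r : ℝ) : EReal) :=
  entha_inv_eq_entha_sub_log_mod_general μ φ hφ hφsymm r hr hmod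
end
end

section
/- Let G be an LCA group, φ an endomorphism of G, and let {N_i : i ∈ I} be a family of open φ-invariant subgroups of G which is directed by inclusion and satisfies G = ⋃_{i∈I} N_i. Then h_A(φ) = sup_{i∈I} h_A(φ↾_{N_i}). -/
open MeasureTheory Filter Pointwise

noncomputable section

/-!
Every compact neighbourhood `C` of `0` in `G` lies in some `N i`, since the `N i` form a directed
open cover. Trajectories commute with the inclusion `N i → G`, which is a measurable embedding,
so `C` has the same entropy whether it is regarded in `G` or in `N i`. Conversely, a compact
neighbourhood of `0` in the open subgroup `N i` is one in `G` as well.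
-/

theorem image_traj {G H : Type*} [AddCommGroup G] [AddCommGroup H] {f : G →+ H}
    {φ : G → G} {ψ : H → H} (h : Function.Semiconj f φ ψ) (C : Set G) (n : ℕ) :
    f '' traj φ C n = traj ψ (f '' C) n := by
  simp only [traj, Set.image_finsetSum, ← Set.image_comp, (h.iterate_right _).comp_eq]

theorem entH_comap_eq {G H : Type*} [AddCommGroup G] [AddCommGroup H]
    [MeasurableSpace G] [MeasurableSpace H] (μ : Measure H) {f : G →+ H}
    (hf : MeasurableEmbedding f) {φ : G → G} {ψ : H → H} (h : Function.Semiconj f φ ψ)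
    (C : Set G) : entH (μ.comap f) φ C = entH μ ψ (f '' C) := by
  simp only [entH, hf.comap_apply, image_traj h]

section OpenSubgroup

variable {G : Type*} [AddCommGroup G] [TopologicalSpace G] [MeasurableSpace G] [BorelSpace G]
  (μ : Measure G) {N : AddSubgroup G} (hN : IsOpen (N : Set G))
  {φ : G → G} {ψ : N → N} (hψ : Function.Semiconj (Subtype.val : N → G) ψ φ)
include hN hψ

theorem entH_comap_subtype_eq (C : Set N) :
    entH (μ.comap Subtype.val) ψ C = entH μ φ (Subtype.val '' C) :=
  entH_comap_eq μ (f := N.subtype) (.subtype_coe hN.measurableSet) hψ C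

theorem entha_comap_subtype_le : entha (μ.comap Subtype.val) ψ ≤ entha μ φ := by
  refine iSup₂_le fun C hC => ?_
  rw [entH_comap_subtype_eq μ hN hψ]
  refine le_iSup₂_of_le (Subtype.val '' C) ⟨hC.1.image continuous_subtype_val, ?_⟩ le_rfl
  exact N.coe_zero ▸ hN.isOpenMap_subtype_val.image_mem_nhds hC.2

theorem entH_le_entha_comap_subtype {C : Set G} (hC : IsCompact C) (hC0 : C ∈ nhds 0)
    (hCN : C ⊆ N) : entH μ φ C ≤ entha (μ.comap Subtype.val) ψ := by
  have himage : Subtype.val '' (Subtype.val ⁻¹' C : Set N) = C :=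
    Set.image_preimage_eq_of_subset (by simpa using hCN)
  have hcompact : IsCompact (Subtype.val ⁻¹' C : Set N) := by
    rwa [Topology.IsEmbedding.subtypeVal.isCompact_iff, himage]
  have hnhds : (Subtype.val ⁻¹' C : Set N) ∈ nhds 0 :=
    continuous_subtype_val.continuousAt.preimage_mem_nhds hC0
  rw [← himage, ← entH_comap_subtype_eq μ hN hψ]
  exact le_iSup₂_of_le _ ⟨hcompact, hnhds⟩ le_rfl

end OpenSubgroup

theorem entha_eq_iSup_entha_restrict_of_directed_general
    {G : Type*} [AddCommGroup G] [TopologicalSpace G]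
    [MeasurableSpace G] [BorelSpace G]
    (μ : Measure G)
    (φ : G →+ G)
    {I : Type*} (N : I → AddSubgroup G)
    (hopen : ∀ i, IsOpen ((N i : Set G)))
    (hinv : ∀ i, ∀ x ∈ N i, φ x ∈ N i)
    (hdir : ∀ i j, ∃ k, N i ≤ N k ∧ N j ≤ N k)
    (hcover : ∀ x : G, ∃ i, x ∈ N i) :
    entha μ (⇑φ) =
      ⨆ i, entha (μ.comap (Subtype.val : N i → G))
        (fun x : N i => (⟨φ x, hinv i x x.2⟩ : N i)) := by
  have : Nonempty I := ⟨(hcover 0).choose⟩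
  refine le_antisymm (iSup₂_le fun C hC => ?_)
    (iSup_le fun i => entha_comap_subtype_le μ (hopen i) fun _ => rfl)
  obtain ⟨i, hCi⟩ := hC.1.elim_directed_cover (fun i => (N i : Set G)) hopen
    (fun x _ => Set.mem_iUnion.2 (hcover x)) hdir
  exact le_iSup_of_le i (entH_le_entha_comap_subtype μ (hopen i) (fun _ => rfl) hC.1 hC.2 hCi)

/-- **Continuity of the algebraic entropy on direct limits of open invariant subgroups.**
Let `G` be an LCA group with Haar measure `μ`, `φ` a continuous endomorphism of `G`, and
`{N i : i ∈ I}` a family of open `φ`-invariant subgroups of `G`, directed by inclusion,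
with `G = ⋃ i, N i`.  Then `h_A(φ) = ⨆ i, h_A(φ↾_{N i})`, the entropy of each restriction
being computed with the restricted Haar measure. -/
theorem entha_eq_iSup_entha_restrict_of_directed
    {G : Type*} [AddCommGroup G] [TopologicalSpace G] [IsTopologicalAddGroup G]
    [LocallyCompactSpace G] [MeasurableSpace G] [BorelSpace G]
    (μ : Measure G) [μ.IsAddHaarMeasure] [μ.Regular]
    (φ : G →+ G) (hφ : Continuous φ)
    {I : Type*} (N : I → AddSubgroup G)
    (hopen : ∀ i, IsOpen ((N i : Set G)))
    (hinv : ∀ i, ∀ x ∈ N i, φ x ∈ N i)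
    (hdir : ∀ i j, ∃ k, N i ≤ N k ∧ N j ≤ N k)
    (hcover : ∀ x : G, ∃ i, x ∈ N i) :
    entha μ (⇑φ) =
      ⨆ i, entha (μ.comap (Subtype.val : N i → G))
        (fun x : N i => (⟨φ x, hinv i x x.2⟩ : N i)) :=
  entha_eq_iSup_entha_restrict_of_directed_general μ φ N hopen hinv hdir hcover
end
end

section
/- Let G be an LCA group, φ an endomorphism of G, and C a compact neighborhood of 0 in G. Then 0 ≤ H^≤(φ, C) ≤ H_A(φ, C) ≤ h_A(φ). Moreover, if φ is an automorphism of G, then log(mod_G(φ)) ≤ H^≤(φ, C). -/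
/-! Since `0 ∈ C`, the minor trajectory `C + φ^{n-1} C` contains both `C` and `φ^{n-1} C`, and for
`n ≥ 2` it sits inside the full trajectory. Hence its measure is bounded below by `μ C`, which has
exponential growth rate `0`, and, when `φ` scales Haar measure by `r`, by
`μ(φ^{n-1}(int C)) = r^{n-1} μ(int C)`, whose growth rate is `log r`. -/

open MeasureTheory Filter Pointwise

noncomputable section

/-- The minor `n`-th `φ`-trajectory of `C`: `C + φ^{n-1} C` (pointwise sum of sets). -/
def trajLe {G : Type*} [AddCommGroup G] (φ : G → G) (C : Set G) (n : ℕ) : Set G :=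
  C + φ^[n - 1] '' C

/-- The lower algebraic entropy `H^≤(φ, C)`, computed on minor trajectories. -/
def entHle {G : Type*} [AddCommGroup G] [MeasurableSpace G]
    (μ : Measure G) (φ : G → G) (C : Set G) : EReal :=
  Filter.limsup (fun n : ℕ => ENNReal.log (μ (trajLe φ C n)) / (n : EReal)) Filter.atTop

open ExpGrowth

lemma Set.finsetSum_subset_finsetSum_of_zero_mem {ι M : Type*} [AddCommMonoid M] [DecidableEq ι]
    {A : ι → Set M} {s t : Finset ι} (hst : s ⊆ t) (h0 : ∀ i ∈ t \ s, (0 : M) ∈ A i) :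
    ∑ i ∈ s, A i ⊆ ∑ i ∈ t, A i := by
  rw [← Finset.sum_sdiff hst]
  refine Set.subset_add_right _ ?_
  simpa using Set.finsetSum_mem_finsetSum (t \ s) A (fun _ => 0) h0

section Trajectory

variable {G : Type*} [AddCommGroup G] (φ : G →+ G) {C : Set G}

lemma zero_mem_image_iterate (h0 : (0 : G) ∈ C) (k : ℕ) : (0 : G) ∈ (⇑φ)^[k] '' C :=
  ⟨0, h0, iterate_map_zero φ k⟩

lemma subset_trajLe (h0 : (0 : G) ∈ C) (n : ℕ) : C ⊆ trajLe φ C n :=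
  Set.subset_add_left C (zero_mem_image_iterate φ h0 _)

lemma image_iterate_subset_trajLe (h0 : (0 : G) ∈ C) (n : ℕ) :
    (⇑φ)^[n - 1] '' C ⊆ trajLe φ C n :=
  Set.subset_add_right _ h0

lemma trajLe_subset_traj (h0 : (0 : G) ∈ C) {n : ℕ} (hn : 2 ≤ n) :
    trajLe φ C n ⊆ traj φ C n := by
  have hends : ({0, n - 1} : Finset ℕ) ⊆ Finset.range n := by
    intro i
    simp only [Finset.mem_insert, Finset.mem_singleton, Finset.mem_range]
    omega
  calc trajLe φ C n = ∑ i ∈ {0, n - 1}, (⇑φ)^[i] '' C := by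
        rw [Finset.sum_pair (by omega), Function.iterate_zero, Set.image_id]; rfl
    _ ⊆ traj φ C n :=
        Set.finsetSum_subset_finsetSum_of_zero_mem hends fun i _ => zero_mem_image_iterate φ h0 i

end Trajectory

section Scaling

variable {α : Type*} [MeasurableSpace α] {μ : Measure α} {f : α → α} {ρ : ENNReal}

lemma measurableSet_image_iterate (hf : ∀ E, MeasurableSet E → MeasurableSet (f '' E))
    {E : Set α} (hE : MeasurableSet E) (k : ℕ) : MeasurableSet (f^[k] '' E) := by
  induction k with
  | zero => simpa using hE
  | succ k ih => rw [Function.iterate_succ', Set.image_comp]; exact hf _ ih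

lemma measure_image_iterate (hf : ∀ E, MeasurableSet E → MeasurableSet (f '' E))
    (hμf : ∀ E, MeasurableSet E → μ (f '' E) = ρ * μ E) {E : Set α} (hE : MeasurableSet E)
    (k : ℕ) : μ (f^[k] '' E) = ρ ^ k * μ E := by
  induction k with
  | zero => simp
  | succ k ih =>
    rw [Function.iterate_succ', Set.image_comp, hμf _ (measurableSet_image_iterate hf hE k), ih,
      pow_succ', mul_assoc]

end Scaling

section Entropy

variable {G : Type*} [AddCommGroup G] [MeasurableSpace G] (μ : Measure G) {C : Set G}

lemma entHle_eq_expGrowthSup (φ : G → G) :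
    entHle μ φ C = expGrowthSup fun n => μ (trajLe φ C n) := rfl

lemma entH_eq_expGrowthSup (φ : G → G) :
    entH μ φ C = expGrowthSup fun n => μ (traj φ C n) := rfl

lemma entHle_le_entH (φ : G →+ G) (h0 : (0 : G) ∈ C) : entHle μ φ C ≤ entH μ φ C := by
  rw [entHle_eq_expGrowthSup, entH_eq_expGrowthSup]
  refine expGrowthSup_eventually_monotone ?_
  filter_upwards [eventually_ge_atTop 2] with n hn
  exact measure_mono (trajLe_subset_traj φ h0 hn)

variable [TopologicalSpace G]

lemma entH_le_entha (φ : G → G) (hC : IsCompact C) (hC0 : C ∈ nhds (0 : G)) :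
    entH μ φ C ≤ entha μ φ :=
  le_iSup₂ (f := fun D _ => entH μ φ D) C ⟨hC, hC0⟩

variable [μ.IsOpenPosMeasure]

lemma entHle_nonneg [IsFiniteMeasureOnCompacts μ] (φ : G →+ G) (hC : IsCompact C)
    (hC0 : C ∈ nhds (0 : G)) : 0 ≤ entHle μ φ C := by
  rw [entHle_eq_expGrowthSup, ← expGrowthSup_const (Measure.measure_pos_of_mem_nhds μ hC0).ne'
    hC.measure_lt_top.ne]
  exact expGrowthSup_monotone fun n => measure_mono (subset_trajLe φ (mem_of_mem_nhds hC0) n)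

lemma log_le_entHle_of_measure_image [OpensMeasurableSpace G] (φ : G →+ G) {ρ : ENNReal}
    (hρ : ρ ≠ ⊤) (hφ : ∀ E, MeasurableSet E → MeasurableSet (φ '' E))
    (hμφ : ∀ E, MeasurableSet E → μ (φ '' E) = ρ * μ E) (hC0 : C ∈ nhds (0 : G)) :
    ENNReal.log ρ ≤ entHle μ φ C := by
  -- `C` itself need not be measurable: `G` is not assumed to be Hausdorff.
  set U := interior C
  have hU : MeasurableSet U := isOpen_interior.measurableSet
  have hμU : μ U ≠ 0 := (Measure.measure_pos_of_mem_nhds μ (interior_mem_nhds.2 hC0)).ne'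
  have hgrowth : ∀ n, 1 ≤ n → μ U * ρ ^ n ≤ ρ * μ (trajLe φ C n) := by
    intro n hn
    calc μ U * ρ ^ n = ρ * μ ((⇑φ)^[n - 1] '' U) := by
          rw [measure_image_iterate hφ hμφ hU, ← mul_assoc, ← pow_succ', Nat.sub_add_cancel hn,
            mul_comm]
      _ ≤ ρ * μ (trajLe φ C n) := by
          gcongr
          exact (Set.image_mono interior_subset).trans
            (image_iterate_subset_trajLe φ (mem_of_mem_nhds hC0) n)
  calc ENNReal.log ρ = expGrowthSup fun n => ρ ^ n := expGrowthSup_pow.symm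
    _ ≤ expGrowthSup fun n => μ U * ρ ^ n := expGrowthSup_of_eventually_ge hμU (.of_forall fun _ => le_rfl)
    _ ≤ entHle μ φ C := expGrowthSup_le_of_eventually_le hρ
          ((eventually_ge_atTop 1).mono hgrowth)

end Entropy

theorem entHle_le_entH_le_entha_general
    {G : Type*} [AddCommGroup G] [TopologicalSpace G]
    [MeasurableSpace G] [BorelSpace G]
    (μ : Measure G) [μ.IsAddHaarMeasure]
    (φ : G →+ G)
    (C : Set G) (hC : IsCompact C) (hC0 : C ∈ nhds (0 : G)) :
    (0 ≤ entHle μ (⇑φ) C ∧ entHle μ (⇑φ) C ≤ entH μ (⇑φ) C ∧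
      entH μ (⇑φ) C ≤ entha μ (⇑φ)) ∧
    (∀ (ψ : G ≃+ G), Continuous ψ → Continuous ψ.symm → (⇑ψ : G → G) = ⇑φ →
      ∀ (r : ℝ), 0 < r →
        (∀ E : Set G, MeasurableSet E → μ (⇑ψ '' E) = ENNReal.ofReal r * μ E) →
        ((Real.log r : ℝ) : EReal) ≤ entHle μ (⇑φ) C) := by
  refine ⟨⟨entHle_nonneg μ φ hC hC0, entHle_le_entH μ φ (mem_of_mem_nhds hC0),
    entH_le_entha μ φ hC hC0⟩, ?_⟩
  intro ψ _ hψ_symm hψφ r hr hμψ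
  have hψ_meas : ∀ E, MeasurableSet E → MeasurableSet (ψ '' E) := fun E hE =>
    ψ.toEquiv.image_eq_preimage_symm E ▸ hψ_symm.measurable hE
  rw [← ENNReal.log_ofReal_of_pos hr, ← hψφ]
  exact log_le_entHle_of_measure_image μ ψ.toAddMonoidHom ENNReal.ofReal_ne_top hψ_meas hμψ hC0

/-- **Basic estimates for the minor trajectories.**
Let `G` be an LCA group with Haar measure `μ`, `φ` a continuous endomorphism of `G` and
`C` a compact neighbourhood of `0`.  Then `0 ≤ H^≤(φ,C) ≤ H_A(φ,C) ≤ h_A(φ)`; moreover,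
if `φ` is a topological automorphism with modulus `r` (i.e. `μ(φ E) = r·μ(E)` for all
measurable `E`) then `log r ≤ H^≤(φ, C)`. -/
theorem entHle_le_entH_le_entha
    {G : Type*} [AddCommGroup G] [TopologicalSpace G] [IsTopologicalAddGroup G]
    [LocallyCompactSpace G] [MeasurableSpace G] [BorelSpace G]
    (μ : Measure G) [μ.IsAddHaarMeasure] [μ.Regular]
    (φ : G →+ G) (hφ : Continuous φ)
    (C : Set G) (hC : IsCompact C) (hC0 : C ∈ nhds (0 : G)) :
    (0 ≤ entHle μ (⇑φ) C ∧ entHle μ (⇑φ) C ≤ entH μ (⇑φ) C ∧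
      entH μ (⇑φ) C ≤ entha μ (⇑φ)) ∧
    (∀ (ψ : G ≃+ G), Continuous ψ → Continuous ψ.symm → (⇑ψ : G → G) = ⇑φ →
      ∀ (r : ℝ), 0 < r →
        (∀ E : Set G, MeasurableSet E → μ (⇑ψ '' E) = ENNReal.ofReal r * μ E) →
        ((Real.log r : ℝ) : EReal) ≤ entHle μ (⇑φ) C) :=
  entHle_le_entH_le_entha_general μ φ C hC hC0
end
end

section
/- Let N be a positive integer, P a finite set of prime numbers, and k ≥ 3 an integer. Consider the LCA group G = ℝ^N × ∏_{p∈P} ℚ_p^N, the diagonal embedding α : ℚ^N → G given coordinatewise by the inclusions ℚ ⊆ ℝ and ℚ ⊆ ℚ_p, and the compact set 𝒟(1/k) = [−1/k, 1/k]^N × ∏_{p∈P} ℤ_p^N ⊆ G. Then: (1) if x, y ∈ (Z_(P))^N and x ≠ y, then (α(x) + 𝒟(1/k)) ∩ (α(y) + 𝒟(1/k)) = ∅; (2) if F ⊆ (Z_(P))^N is finite, then μ(α(F) + 𝒟(1/k)) = |F|, where μ is the Haar measure on G normalized so that μ(𝒟(1/k)) = 1. -/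
/-!
If distinct `x, y ∈ Z_(P)^N` had overlapping `𝒟(1/k)`-translates, then for some `j` the rational
`q = x j - y j ∈ Z_(P)` would satisfy `|q| ≤ 2/k < 1` and `|q|_p ≤ 1` for every `p ∈ P`. Elements
of `Z_(P)` are `r`-adically integral for every prime `r ∉ P` anyway, so `q` is an integer of
absolute value `< 1`, i.e. `q = 0`. The measure statement follows from this disjointness,
finite additivity and translation invariance of Haar measure.
-/

open MeasureTheory Filter Pointwise
open scoped ENNReal

noncomputable section

/-- The subring `Z_(P)` of `ℚ` generated by `1` and the elements `1/p` for `p ∈ P`. -/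
def ZP (P : Set ℕ) : Subring ℚ :=
  Subring.closure {x : ℚ | ∃ p ∈ P, x = ((p : ℚ))⁻¹}

noncomputable instance (q : ℕ) [Fact q.Prime] : MeasurableSpace ℚ_[q] := borel _
instance (q : ℕ) [Fact q.Prime] : BorelSpace ℚ_[q] := ⟨rfl⟩

theorem ZP_le_comap_padicInt {P : Set ℕ} (hP : ∀ q ∈ P, q.Prime) (r : ℕ) [Fact r.Prime]
    (hr : r ∉ P) : ZP P ≤ (PadicInt.subring r).comap (Rat.castHom ℚ_[r]) := by
  refine Subring.closure_le.2 ?_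
  rintro _ ⟨q, hq, rfl⟩
  refine Padic.norm_rat_le_one ?_
  rw [Rat.inv_natCast_den_of_pos (hP q hq).pos, Nat.prime_dvd_prime_iff_eq Fact.out (hP q hq)]
  exact fun h => hr (h ▸ hq)

theorem Rat.den_eq_one_of_forall_norm_padic_le_one {x : ℚ}
    (h : ∀ (r : ℕ) [Fact r.Prime], ‖(x : ℚ_[r])‖ ≤ 1) : x.den = 1 := by
  by_contra hden
  obtain ⟨r, hr, hrx⟩ := Nat.exists_prime_and_dvd hden
  have := Fact.mk hr
  have hr' := h r
  rw [Padic.norm_rat_le_one_iff_padicValuation_le_one, Rat.padicValuation_le_one_iff] at hr'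
  exact hr' hrx

theorem eq_zero_of_mem_ZP_of_norm_padic_le_one {ι : Type*} (p : ι → ℕ) [∀ i, Fact (p i).Prime]
    {x : ℚ} (hx : x ∈ ZP (Set.range p)) (hnorm : ∀ i, ‖(x : ℚ_[p i])‖ ≤ 1) (habs : |x| < 1) :
    x = 0 := by
  have hden : x.den = 1 := by
    refine Rat.den_eq_one_of_forall_norm_padic_le_one fun r _ => ?_
    by_cases hr : r ∈ Set.range p
    · obtain ⟨i, rfl⟩ := hr
      exact hnorm i
    · have hP : ∀ q ∈ Set.range p, q.Prime := by rintro _ ⟨i, rfl⟩; exact Fact.out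
      exact ZP_le_comap_padicInt hP r hr hx
  rw [← Rat.coe_int_num_of_den_eq_one hden] at habs ⊢
  have hnum : x.num = 0 := Int.abs_lt_one_iff.1 (by exact_mod_cast habs)
  rw [hnum, Int.cast_zero]

theorem MeasureTheory.measure_add_eq_encard_mul {G : Type*} [AddGroup G] [MeasurableSpace G]
    [MeasurableAdd G] (μ : Measure G) [μ.IsAddLeftInvariant] {A D : Set G} (hA : A.Finite)
    (hD : MeasurableSet D) (hdisj : A.PairwiseDisjoint (· +ᵥ D)) :
    μ (A + D) = A.encard * μ D := by
  lift A to Finset G using hA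
  have hcover : (A : Set G) + D = ⋃ a ∈ A, a +ᵥ D := Set.iUnion_add_left_image.symm
  rw [hcover, measure_biUnion_finset hdisj fun a _ => hD.const_vadd a]
  simp [Set.encard_coe_eq_coe_finsetCard]

section Adelic

variable {ι : Type*} (p : ι → ℕ) [∀ i, Fact (p i).Prime]

def adelicBox (N : ℕ) (ε : ℝ) : Set ((Fin N → ℝ) × ((i : ι) → Fin N → ℚ_[p i])) :=
  {z | (∀ j, |z.1 j| ≤ ε) ∧ ∀ i j, ‖z.2 i j‖ ≤ 1}

variable {N : ℕ}

def ratDiag (x : Fin N → ℚ) : (Fin N → ℝ) × ((i : ι) → Fin N → ℚ_[p i]) :=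
  (fun j => (x j : ℝ), fun i j => (x j : ℚ_[p i]))

theorem ratDiag_injective : Function.Injective (ratDiag p : (Fin N → ℚ) → _) := fun _ _ h =>
  funext fun j => Rat.cast_injective (congrFun (congrArg Prod.fst h) j)

theorem ratDiag_sub (x y : Fin N → ℚ) : ratDiag p (x - y) = ratDiag p x - ratDiag p y := by
  ext <;> simp [ratDiag]

theorem isClosed_adelicBox (ε : ℝ) : IsClosed (adelicBox p N ε) := by
  simp only [adelicBox, Set.ofPred_and, Set.ofPred_forall]
  exact (isClosed_iInter fun j => isClosed_le (by fun_prop) continuous_const).inter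
    (isClosed_iInter fun i => isClosed_iInter fun j => isClosed_le (by fun_prop) continuous_const)

theorem adelicBox_sub_adelicBox_subset (ε δ : ℝ) :
    adelicBox p N ε - adelicBox p N δ ⊆ adelicBox p N (ε + δ) := by
  rintro _ ⟨a, ⟨ha₁, ha₂⟩, b, ⟨hb₁, hb₂⟩, rfl⟩
  refine ⟨fun j => (abs_sub _ _).trans (add_le_add (ha₁ j) (hb₁ j)), fun i j => ?_⟩
  have h := IsUltrametricDist.norm_add_le_max (a.2 i j) (-b.2 i j)
  rw [norm_neg, ← sub_eq_add_neg] at h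
  exact h.trans (max_le (ha₂ i j) (hb₂ i j))

theorem eq_zero_of_ratDiag_mem_adelicBox {ε : ℝ} (hε : ε < 1) {x : Fin N → ℚ}
    (hx : ∀ j, x j ∈ ZP (Set.range p)) (hbox : ratDiag p x ∈ adelicBox p N ε) : x = 0 :=
  funext fun j => eq_zero_of_mem_ZP_of_norm_padic_le_one p (hx j) (fun i => hbox.2 i j) <| by
    have h : |((x j : ℚ) : ℝ)| < 1 := (hbox.1 j).trans_lt hε
    exact_mod_cast h

theorem disjoint_ratDiag_vadd_adelicBox {ε : ℝ} (hε : ε + ε < 1) {x y : Fin N → ℚ}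
    (hx : ∀ j, x j ∈ ZP (Set.range p)) (hy : ∀ j, y j ∈ ZP (Set.range p)) (hxy : x ≠ y) :
    Disjoint (ratDiag p x +ᵥ adelicBox p N ε) (ratDiag p y +ᵥ adelicBox p N ε) := by
  refine Set.disjoint_left.2 ?_
  rintro _ ⟨a, ha, rfl⟩ ⟨b, hb, hab⟩
  refine hxy (sub_eq_zero.1 (eq_zero_of_ratDiag_mem_adelicBox p hε
    (fun j => sub_mem (hx j) (hy j)) (adelicBox_sub_adelicBox_subset p ε ε ?_)))
  refine ⟨b, hb, a, ha, ?_⟩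
  rw [ratDiag_sub, sub_eq_sub_iff_add_eq_add, add_comm b]
  simpa only [vadd_eq_add] using hab

end Adelic

theorem separation_in_adelic_product_general
    {N : ℕ} {ι : Type*} [Fintype ι]
    (p : ι → ℕ) [hp : ∀ i, Fact (p i).Prime]
    (k : ℕ) (hk : 3 ≤ k)
    (μ : Measure ((Fin N → ℝ) × ((i : ι) → Fin N → ℚ_[p i])))
    [μ.IsAddHaarMeasure]
    (D : Set ((Fin N → ℝ) × ((i : ι) → Fin N → ℚ_[p i])))
    (hD : D = {z | (∀ j, |z.1 j| ≤ 1 / (k : ℝ)) ∧ ∀ i j, ‖z.2 i j‖ ≤ 1})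
    (hμD : μ D = 1)
    (α : (Fin N → ℚ) → (Fin N → ℝ) × ((i : ι) → Fin N → ℚ_[p i]))
    (hα : ∀ x, α x = (fun j => (x j : ℝ), fun i j => ((x j : ℚ) : ℚ_[p i]))) :
    (∀ x y : Fin N → ℚ, (∀ j, x j ∈ ZP (Set.range p)) → (∀ j, y j ∈ ZP (Set.range p)) →
      x ≠ y → (α x +ᵥ D) ∩ (α y +ᵥ D) = ∅) ∧
    (∀ F : Set (Fin N → ℚ), F.Finite → (∀ x ∈ F, ∀ j, x j ∈ ZP (Set.range p)) →
      μ (α '' F + D) = (F.encard : ℝ≥0∞)) := by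
  obtain rfl : D = adelicBox p N (1 / k) := hD
  obtain rfl : α = ratDiag p := funext hα
  have hk2 : 1 / (k : ℝ) + 1 / k < 1 := by
    rw [← add_div, div_lt_one (by positivity)]
    linarith [show (3 : ℝ) ≤ k by exact_mod_cast hk]
  refine ⟨fun x y hx hy hxy => (disjoint_ratDiag_vadd_adelicBox p hk2 hx hy hxy).inter_eq,
    fun F hF hFZ => ?_⟩
  have : MeasurableAdd ((Fin N → ℝ) × ((i : ι) → Fin N → ℚ_[p i])) := ContinuousAdd.measurableAdd
  rw [measure_add_eq_encard_mul μ (hF.image _) (isClosed_adelicBox p _).measurableSet, hμD,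
    mul_one, (ratDiag_injective p).encard_image]
  rintro _ ⟨x, hx, rfl⟩ _ ⟨y, hy, rfl⟩ hne
  exact disjoint_ratDiag_vadd_adelicBox p hk2 (hFZ x hx) (hFZ y hy) (ne_of_apply_ne _ hne)

/-- **Separation of `(Z_(P))^N` inside `ℝ^N × ∏_{p ∈ P} ℚ_p^N`.**
Let `P = {p i}` be a finite set of primes, `k ≥ 3`, `G = ℝ^N × ∏_{p∈P} ℚ_p^N`,
`α : ℚ^N → G` the diagonal embedding and `𝒟 = [-1/k,1/k]^N × ∏_p ℤ_p^N`.  Then distinct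
points of `(Z_(P))^N` have disjoint `𝒟`-translates, and for finite `F ⊆ (Z_(P))^N` the
Haar measure (normalised by `μ(𝒟) = 1`) of `α(F) + 𝒟` equals `|F|`. -/
theorem separation_in_adelic_product
    {N : ℕ} (hN : 0 < N) {ι : Type*} [Fintype ι]
    (p : ι → ℕ) [hp : ∀ i, Fact (p i).Prime] (hinj : Function.Injective p)
    (k : ℕ) (hk : 3 ≤ k)
    (μ : Measure ((Fin N → ℝ) × ((i : ι) → Fin N → ℚ_[p i])))
    [μ.IsAddHaarMeasure]
    (D : Set ((Fin N → ℝ) × ((i : ι) → Fin N → ℚ_[p i])))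
    (hD : D = {z | (∀ j, |z.1 j| ≤ 1 / (k : ℝ)) ∧ ∀ i j, ‖z.2 i j‖ ≤ 1})
    (hμD : μ D = 1)
    (α : (Fin N → ℚ) → (Fin N → ℝ) × ((i : ι) → Fin N → ℚ_[p i]))
    (hα : ∀ x, α x = (fun j => (x j : ℝ), fun i j => ((x j : ℚ) : ℚ_[p i]))) :
    (∀ x y : Fin N → ℚ, (∀ j, x j ∈ ZP (Set.range p)) → (∀ j, y j ∈ ZP (Set.range p)) →
      x ≠ y → (α x +ᵥ D) ∩ (α y +ᵥ D) = ∅) ∧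
    (∀ F : Set (Fin N → ℚ), F.Finite → (∀ x ∈ F, ∀ j, x j ∈ ZP (Set.range p)) →
      μ (α '' F + D) = (F.encard : ℝ≥0∞)) :=
  separation_in_adelic_product_general p (hp := hp) k hk μ D hD hμD α hα
end
end

section
/- Let N be a positive integer, p a prime, k ≥ 3 an integer, and h the maximal nonnegative integer such that p^h ≤ k. Then for every positive integer m divisible by p^h, one has D_{p,N}(k) ⊆ α_p(E_m) + ℤ_p^N, where D_{p,N}(k) = { x ∈ ℚ_p^N : max_i |x_i|_p ≤ k } and α_p : ℚ^N → ℚ_p^N is the coordinatewise inclusion. -/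
open Pointwise

noncomputable section

/-- The finite subset `E_m = { (c_1,…,c_N) : c_i = j/m, j ∈ ℤ, |j| ≤ m }` of `ℚ^N`. -/
def Em (N m : ℕ) : Set (Fin N → ℚ) :=
  {c | ∀ i, ∃ j : ℤ, |j| ≤ (m : ℤ) ∧ c i = (j : ℚ) / (m : ℚ)}

/-!
If `|x|_p ≤ p^h`, then `p^h x` is a `p`-adic integer, hence congruent modulo `p^h ℤ_p` to a natural
number `a < p^h`; so `x - a / p^h ∈ ℤ_p`. When `m = p^h t`, `a / p^h = a t / m` with `0 ≤ a t ≤ m`.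
Since `p`-adic norms are powers of `p`, `|x|_p ≤ k < p^(h+1)` already gives `|x|_p ≤ p^h`.
-/

namespace Padic

variable {p : ℕ} [Fact p.Prime]

theorem exists_nat_lt_norm_sub_div_pow_le_one {x : ℚ_[p]} {h : ℕ} (hx : ‖x‖ ≤ (p : ℝ) ^ h) :
    ∃ a : ℕ, a < p ^ h ∧ ‖x - a / (p : ℚ_[p]) ^ h‖ ≤ 1 := by
  have hz : ‖(p : ℚ_[p]) ^ h * x‖ ≤ 1 := by
    have hph : (0 : ℝ) < (p : ℝ) ^ h := pow_pos (Nat.cast_pos.2 (Fact.out : p.Prime).pos) h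
    rw [norm_mul, norm_pow, norm_p, inv_pow, inv_mul_le_iff₀ hph, mul_one]
    exact hx
  set z : ℤ_[p] := ⟨_, hz⟩
  obtain ⟨w, hw⟩ := Ideal.mem_span_singleton'.1 (PadicInt.appr_spec h z)
  refine ⟨z.appr h, z.appr_lt h, ?_⟩
  have hp : (p : ℚ_[p]) ^ h ≠ 0 := pow_ne_zero _ (Nat.cast_ne_zero.2 (Fact.out : p.Prime).ne_zero)
  have hw' : (w : ℚ_[p]) * (p : ℚ_[p]) ^ h = (p : ℚ_[p]) ^ h * x - z.appr h := by
    simpa using congrArg ((↑) : ℤ_[p] → ℚ_[p]) hw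
  have hxw : x - z.appr h / (p : ℚ_[p]) ^ h = w := by
    field_simp
    linear_combination -hw'
  rw [hxw]
  exact w.norm_le_one

theorem exists_int_abs_le_norm_sub_div_le_one {x : ℚ_[p]} {h m : ℕ} (hm : 0 < m)
    (hdvd : p ^ h ∣ m) (hx : ‖x‖ ≤ (p : ℝ) ^ h) :
    ∃ j : ℤ, |j| ≤ m ∧ ‖x - ((j / m : ℚ) : ℚ_[p])‖ ≤ 1 := by
  obtain ⟨a, ha, hxa⟩ := exists_nat_lt_norm_sub_div_pow_le_one hx
  obtain ⟨t, rfl⟩ := hdvd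
  have ht : (t : ℚ_[p]) ≠ 0 := Nat.cast_ne_zero.2 (Nat.pos_of_mul_pos_left hm).ne'
  refine ⟨(a * t : ℕ), ?_, ?_⟩
  · rw [abs_of_nonneg (by positivity)]
    exact_mod_cast Nat.mul_le_mul_right t ha.le
  · convert hxa using 3
    push_cast
    field_simp

end Padic

theorem disc_subset_Em_add_intPolydisc_general
    (p : ℕ) [Fact p.Prime] {N : ℕ}
    (k h : ℕ) (hph' : k < p ^ (h + 1))
    (m : ℕ) (hm : 0 < m) (hdvd : p ^ h ∣ m) :
    {x : Fin N → ℚ_[p] | ∀ i, ‖x i‖ ≤ (k : ℝ)} ⊆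
      ((fun c : Fin N → ℚ => fun i => ((c i : ℚ) : ℚ_[p])) '' Em N m) +
        {x : Fin N → ℚ_[p] | ∀ i, ‖x i‖ ≤ 1} := by
  intro x hx
  have hxh : ∀ i, ‖x i‖ ≤ (p : ℝ) ^ h := fun i => by
    have := (Padic.norm_le_pow_iff_norm_lt_pow_add_one (x i) h).2
    exact_mod_cast this ((hx i).trans_lt (by exact_mod_cast hph'))
  choose j hj hxj using fun i => Padic.exists_int_abs_le_norm_sub_div_le_one hm hdvd (hxh i)
  exact ⟨_, ⟨fun i => (j i : ℚ) / m, fun i => ⟨j i, hj i, rfl⟩, rfl⟩, _, hxj, add_sub_cancel _ x⟩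

/-- **Discs of `ℚ_p^N` are covered by `E_m` up to `ℤ_p^N`.**
Let `p` be a prime, `k ≥ 3`, and `h` the maximal nonnegative integer with `p^h ≤ k`.
Then for every positive integer `m` divisible by `p^h`,
`D_{p,N}(k) ⊆ α_p(E_m) + ℤ_p^N`. -/
theorem disc_subset_Em_add_intPolydisc
    (p : ℕ) [Fact p.Prime] {N : ℕ} (hN : 0 < N)
    (k h : ℕ) (hk : 3 ≤ k) (hph : p ^ h ≤ k) (hph' : k < p ^ (h + 1))
    (m : ℕ) (hm : 0 < m) (hdvd : p ^ h ∣ m) :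
    {x : Fin N → ℚ_[p] | ∀ i, ‖x i‖ ≤ (k : ℝ)} ⊆
      ((fun c : Fin N → ℚ => fun i => ((c i : ℚ) : ℚ_[p])) '' Em N m) +
        {x : Fin N → ℚ_[p] | ∀ i, ‖x i‖ ≤ 1} :=
  disc_subset_Em_add_intPolydisc_general p k h hph' m hm hdvd
end
end

section
/- Let N be a positive integer, f(X) = X^N + a_1 X^{N-1} + ⋯ + a_N ∈ ℚ[X] a monic polynomial, and s the minimal positive integer such that s·f(X) ∈ ℤ[X]. Let p be a prime and K a finite extension of ℚ_p, equipped with the (unique) multiplicative nonarchimedean norm |·| extending the p-adic norm, over which f splits, with roots λ_1, …, λ_N ∈ K counted with multiplicity. Then log|1/s|_p = Σ_{i : |λ_i| > 1} log|λ_i|, where |·|_p is the p-adic absolute value on ℚ. -/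
/-!
Clearing denominators, `g = s • f` is a primitive integer polynomial: its content divides the
leading coefficient `s`, so minimality of `s` forces the content to be `1`. Hence some coefficient
of `g` is a `p`-adic unit and the Gauss norm of `g` over `K` is `1`. Over a nonarchimedean field
the Gauss norm is multiplicative (Gauss's lemma) and `X - C λ` has Gauss norm `max 1 ‖λ‖`, so
`|s|_p · ∏ max 1 ‖λ_i‖ = 1`; taking logarithms gives the formula.
-/

open Polynomial

namespace Polynomial

theorem supNorm_mul {K : Type*} [NormedField K] [IsUltrametricDist K] (p q : K[X]) :
    (p * q).supNorm = p.supNorm * q.supNorm :=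
  gaussNorm_mul (v := NormedField.toAbsoluteValue K) IsUltrametricDist.isNonarchimedean_norm
    one_pos p q

theorem supNorm_X_sub_C {A : Type*} [SeminormedRing A] [NormOneClass A] (a : A) :
    (X - C a).supNorm = max 1 ‖a‖ := by
  refine le_antisymm ?_ (max_le ?_ ?_)
  · obtain ⟨i, hi⟩ := (X - C a).exists_eq_supNorm
    rw [hi]
    rcases i with _ | _ | i
    · simp
    · simp
    · simp [coeff_X]
  · exact le_of_eq_of_le (by simp) ((X - C a).le_supNorm 1)
  · exact le_of_eq_of_le (by simp) ((X - C a).le_supNorm 0)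

theorem supNorm_prod_X_sub_C {K ι : Type*} [NormedField K] [IsUltrametricDist K]
    (s : Finset ι) (a : ι → K) :
    (∏ i ∈ s, (X - C (a i))).supNorm = ∏ i ∈ s, max 1 ‖a i‖ := by
  induction s using Finset.cons_induction with
  | empty => rw [Finset.prod_empty, Finset.prod_empty, ← C_1, supNorm_C, norm_one]
  | cons i s hi ih => rw [Finset.prod_cons, Finset.prod_cons, supNorm_mul, supNorm_X_sub_C, ih]

theorem isPrimitive_of_minimal_denominator {f : ℚ[X]} (hf : f.Monic) {s : ℕ}
    (hs : 0 < s) {g : ℤ[X]} (hg : g.map (Int.castRingHom ℚ) = (s : ℚ) • f)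
    (hmin : ∀ t : ℕ, 0 < t →
      (∃ g : ℤ[X], g.map (Int.castRingHom ℚ) = (t : ℚ) • f) → s ≤ t) :
    g.IsPrimitive := by
  rw [isPrimitive_iff_content_eq_one]
  have hlead : g.coeff f.natDegree = s := by
    apply Int.cast_injective (α := ℚ)
    simpa [hf.coeff_natDegree] using congrArg (coeff · f.natDegree) hg
  obtain ⟨t, hst⟩ : g.content ∣ s := hlead ▸ content_dvd_coeff f.natDegree
  have hc : 0 ≤ g.content := Int.nonneg_of_normalize_eq_self normalize_content
  have ht : 0 < t := by nlinarith
  have hprimPart : g.primPart.map (Int.castRingHom ℚ) = (t.toNat : ℚ) • f := by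
    have hc0 : (C (g.content : ℚ)) ≠ 0 := by
      rw [C_ne_zero, Int.cast_ne_zero]; rintro h; simp [h] at hst; omega
    refine mul_left_cancel₀ hc0 ?_
    calc C (g.content : ℚ) * g.primPart.map (Int.castRingHom ℚ)
        = g.map (Int.castRingHom ℚ) := by
          conv_rhs => rw [eq_C_content_mul_primPart g]
          simp
      _ = C (g.content : ℚ) * ((t.toNat : ℚ) • f) := by
          rw [hg, smul_eq_C_mul, smul_eq_C_mul, ← mul_assoc, ← C_mul]
          congr 2
          exact_mod_cast (hst.trans (by rw [Int.toNat_of_nonneg ht.le]))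
  have := hmin t.toNat (by omega) ⟨_, hprimPart⟩
  nlinarith [Int.toNat_of_nonneg ht.le]

theorem IsPrimitive.supNorm_map_eq_one {p : ℕ} [Fact p.Prime] {K : Type*} [NormedField K]
    [Algebra ℚ_[p] K] (hext : ∀ x : ℚ_[p], ‖algebraMap ℚ_[p] K x‖ = ‖x‖) {g : ℤ[X]}
    (hg : g.IsPrimitive) : (g.map (Int.castRingHom K)).supNorm = 1 := by
  have hint (z : ℤ) : ‖(z : K)‖ = ‖(z : ℚ_[p])‖ := by
    rw [← map_intCast (algebraMap ℚ_[p] K), hext]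
  refine le_antisymm ?_ ?_
  · obtain ⟨i, hi⟩ := (g.map (Int.castRingHom K)).exists_eq_supNorm
    rw [hi, coeff_map, eq_intCast, hint]
    exact Padic.norm_int_le_one _
  · obtain ⟨j, hj⟩ : ∃ j, ¬ (p : ℤ) ∣ g.coeff j := by
      by_contra! h
      exact (Nat.prime_iff_prime_int.mp Fact.out).not_isUnit
        (hg _ ((C_dvd_iff_dvd_coeff _ _).mpr h))
    have hj_unit : ‖(g.coeff j : ℚ_[p])‖ = 1 :=
      le_antisymm (Padic.norm_int_le_one _) (not_lt.mp (mt Padic.norm_intCast_lt_one_iff.mp hj))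
    calc (1 : ℝ) = ‖(g.map (Int.castRingHom K)).coeff j‖ := by
          rw [coeff_map, eq_intCast, hint, hj_unit]
      _ ≤ _ := le_supNorm _ j

end Polynomial

theorem log_padicNorm_inv_s_eq_sum_log_roots_general
    (p : ℕ) [Fact p.Prime] {K : Type*} [NormedField K] [IsUltrametricDist K]
    [Algebra ℚ_[p] K]
    (hext : ∀ x : ℚ_[p], ‖algebraMap ℚ_[p] K x‖ = ‖x‖)
    {N : ℕ}
    (f : Polynomial ℚ) (hmonic : f.Monic)
    (s : ℕ) (hs : 0 < s)
    (hsf : ∃ g : Polynomial ℤ, g.map (Int.castRingHom ℚ) = (s : ℚ) • f)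
    (hmin : ∀ t : ℕ, 0 < t →
      (∃ g : Polynomial ℤ, g.map (Int.castRingHom ℚ) = (t : ℚ) • f) → s ≤ t)
    (lam : Fin N → K)
    (hsplit : f.map ((algebraMap ℚ_[p] K).comp (algebraMap ℚ ℚ_[p])) =
      ∏ i : Fin N, (X - C (lam i))) :
    Real.log ((padicNorm p ((s : ℚ))⁻¹ : ℚ) : ℝ) =
      ∑ i : Fin N, if 1 < ‖lam i‖ then Real.log ‖lam i‖ else 0 := by
  obtain ⟨g, hg⟩ := hsf
  have hgK : g.map (Int.castRingHom K) = C (s : K) * ∏ i, (X - C (lam i)) := by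
    rw [← hsplit, ← map_natCast ((algebraMap ℚ_[p] K).comp (algebraMap ℚ ℚ_[p])), ← map_C,
      ← Polynomial.map_mul, ← smul_eq_C_mul, ← hg, map_map]
    congr 1
    exact Subsingleton.elim _ _
  have hnorm : ‖(s : K)‖ * ∏ i, max 1 ‖lam i‖ = 1 := by
    rw [← supNorm_C, ← supNorm_prod_X_sub_C, ← supNorm_mul, ← hgK,
      (isPrimitive_of_minimal_denominator hmonic hs hg hmin).supNorm_map_eq_one hext]
  have hs_norm : ((padicNorm p (s : ℚ)⁻¹ : ℚ) : ℝ) = ‖(s : K)‖⁻¹ := by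
    rw [← Padic.eq_padicNorm, Rat.cast_inv, Rat.cast_natCast, norm_inv, ← hext, map_natCast]
  rw [hs_norm, inv_eq_of_mul_eq_one_right hnorm, Real.log_prod fun i _ => by positivity]
  refine Finset.sum_congr rfl fun i _ => ?_
  split_ifs with h
  · rw [max_eq_right h.le]
  · rw [max_eq_left (not_lt.mp h), Real.log_one]

/-- **The `p`-adic contribution to the Mahler measure (Fact C, local form).**
Let `f ∈ ℚ[X]` be monic of degree `N`, `s` the minimal positive integer with
`s·f ∈ ℤ[X]`, and `K` a finite extension of `ℚ_p` (with the unique multiplicative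
nonarchimedean norm extending the `p`-adic norm) over which `f` splits with roots
`λ₁, …, λ_N`.  Then `log |1/s|_p = Σ_{‖λ_i‖ > 1} log ‖λ_i‖`. -/
theorem log_padicNorm_inv_s_eq_sum_log_roots
    (p : ℕ) [Fact p.Prime] {K : Type*} [NormedField K] [IsUltrametricDist K]
    [Algebra ℚ_[p] K] [FiniteDimensional ℚ_[p] K] [CompleteSpace K]
    (hext : ∀ x : ℚ_[p], ‖algebraMap ℚ_[p] K x‖ = ‖x‖)
    {N : ℕ} (hN : 0 < N)
    (f : Polynomial ℚ) (hmonic : f.Monic) (hdeg : f.natDegree = N)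
    (s : ℕ) (hs : 0 < s)
    (hsf : ∃ g : Polynomial ℤ, g.map (Int.castRingHom ℚ) = (s : ℚ) • f)
    (hmin : ∀ t : ℕ, 0 < t →
      (∃ g : Polynomial ℤ, g.map (Int.castRingHom ℚ) = (t : ℚ) • f) → s ≤ t)
    (lam : Fin N → K)
    (hsplit : f.map ((algebraMap ℚ_[p] K).comp (algebraMap ℚ ℚ_[p])) =
      ∏ i : Fin N, (X - C (lam i))) :
    Real.log ((padicNorm p ((s : ℚ))⁻¹ : ℚ) : ℝ) =
      ∑ i : Fin N, if 1 < ‖lam i‖ then Real.log ‖lam i‖ else 0 :=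
  log_padicNorm_inv_s_eq_sum_log_roots_general p hext f hmonic s hs hsf hmin lam hsplit
end
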